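/- Let D be a data word with maximal data value M, and let d, d' have the same 1-type, d ≤₁ d', val(d) ≤ M−2, val(d') ≤ M−2. Let θ be a 2-type such that neither d nor d' has a θ-witness in the trimming D↾₁ (the substructure obtained by removing all elements of maximal data value). If θ(x,y) ⊨ x ≤₁ y and D ⊨ ∃y θ(d', y), then D ⊨ ∃y θ(d, y). -/
import Mathlib



/-- A data word over the alphabet `α`: a finite universe `D` with a linear
order `≤₁`, a total preorder `≲₂`, and a letter (unary relation of the
partition) attached to each element. -/
structure DataWord (α : Type) where
  D : Type
  finD : Finite D
  le1 : D → D → Prop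
  le2 : D → D → Prop
  letter : D → α
  le1_trans : ∀ a b c, le1 a b → le1 b c → le1 a c
  le1_antisymm : ∀ a b, le1 a b → le1 b a → a = b
  le1_total : ∀ a b, le1 a b ∨ le1 b a
  le2_trans : ∀ a b c, le2 a b → le2 b c → le2 a c
  le2_total : ∀ a b, le2 a b ∨ le2 b a

namespace DataWord

variable {α : Type}

/-- Strict linear order `<₁`. -/
def lt1 (W : DataWord α) (a b : W.D) : Prop := W.le1 a b ∧ a ≠ b

/-- Strict part `⋨₂` of the total preorder. -/
def lt2 (W : DataWord α) (a b : W.D) : Prop := W.le2 a b ∧ ¬ W.le2 b a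

/-- Equivalence `∼₂` induced by the total preorder. -/
def sim2 (W : DataWord α) (a b : W.D) : Prop := W.le2 a b ∧ W.le2 b a

/-- The successor relation `S₂` induced by `≲₂`: `S₂ a b` iff `a ≲₂ b` and
there is no `z` with `a ⋨₂ z ⋨₂ b`. -/
def S2 (W : DataWord α) (a b : W.D) : Prop :=
  W.le2 a b ∧ ¬ ∃ z, W.lt2 a z ∧ W.lt2 z b

/-- The data value of `d`: the number of `∼₂`-equivalence classes all of whose
elements are `≲₂ d`. -/
noncomputable def val (W : DataWord α) (d : W.D) : ℕ :=
  Set.ncard {E : Set W.D | (∃ a, E = {b | W.sim2 a b}) ∧ ∀ e ∈ E, W.le2 e d}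

/-- The maximal data value of the data word. -/
noncomputable def maxVal (W : DataWord α) : ℕ := sSup (Set.range W.val)

/-- The induced sub-data-word on a subset of the universe. -/
def restrict (W : DataWord α) (P : Set W.D) : DataWord α where
  D := P
  finD := by have := W.finD; exact Subtype.finite
  le1 := fun a b => W.le1 a b
  le2 := fun a b => W.le2 a b
  letter := fun a => W.letter a
  le1_trans := fun a b c hab hbc => W.le1_trans a b c hab hbc
  le1_antisymm := fun a b hab hba => Subtype.ext (W.le1_antisymm a b hab hba)
  le1_total := fun a b => W.le1_total a b
  le2_trans := fun a b c hab hbc => W.le2_trans a b c hab hbc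
  le2_total := fun a b => W.le2_total a b

/-- The trimming `D↾₁` of a data word: the induced sub-data-word on the
elements of non-maximal data value. -/
noncomputable def trim (W : DataWord α) : DataWord α :=
  W.restrict {d | W.val d ≠ W.maxVal}

end DataWord

/-- An (abstract) 2-type over data words: letters of `x` and `y`, the relative
position in the linear order `≤₁` (`lt`: `x <₁ y`, `eq`: `x = y`, `gt`:
`y <₁ x`), the relative position in the preorder `≲₂` (`lt`: `x ⋨₂ y`, `eq`:
`x ∼₂ y`, `gt`: `y ⋨₂ x`), and whether `S₂(x,y)` and `S₂(y,x)` hold. -/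
structure TwoType (α : Type) where
  ξx : α
  ξy : α
  ord1 : Ordering
  ord2 : Ordering
  sxy : Bool
  syx : Bool

/-- The 2-type `θ` holds of the pair `(x, y)` in the data word `W`. -/
def TwoType.holds {α : Type} (θ : TwoType α) (W : DataWord α) (x y : W.D) : Prop :=
  W.letter x = θ.ξx ∧ W.letter y = θ.ξy ∧
  (match θ.ord1 with
    | .lt => W.lt1 x y
    | .eq => x = y
    | .gt => W.lt1 y x) ∧
  (match θ.ord2 with
    | .lt => W.lt2 x y
    | .eq => W.sim2 x y
    | .gt => W.lt2 y x) ∧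
  (W.S2 x y ↔ θ.sxy = true) ∧ (W.S2 y x ↔ θ.syx = true)

/-- A `D`-task word over a data word `W`: each element `d` carries a witness
type set `ω d` (the set of 2-types of its task set) and the set `completed d`
of 2-types `θ` whose task `C_θ` is completed; `θ ∈ completed d` iff `d` has a
`θ`-witness in `W`, and every `θ ∈ ω d` forces the letter of `d`. -/
structure TaskWord {α : Type} (W : DataWord α) where
  ω : W.D → Set (TwoType α)
  completed : W.D → Set (TwoType α)
  comp_sub : ∀ d, completed d ⊆ ω d
  comp_iff : ∀ d θ, θ ∈ ω d → (θ ∈ completed d ↔ ∃ y, θ.holds W d y)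
  letter_ok : ∀ d θ, θ ∈ ω d → θ.ξx = W.letter d

namespace DataWord

variable {α : Type} (W : DataWord α)

theorem le2_refl (a : W.D) : W.le2 a a := (W.le2_total a a).elim id id

theorem S2_refl (a : W.D) : W.S2 a a :=
  ⟨W.le2_refl a, fun ⟨_, ⟨h1, h2⟩, ⟨h3, _⟩⟩ => h2 h3⟩

theorem sim2_refl (a : W.D) : W.sim2 a a := ⟨W.le2_refl a, W.le2_refl a⟩

theorem sim2_symm' {a b : W.D} (h : W.sim2 a b) : W.sim2 b a := ⟨h.2, h.1⟩

theorem sim2_trans' {a b c : W.D} (h : W.sim2 a b) (h' : W.sim2 b c) : W.sim2 a c :=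
  ⟨W.le2_trans _ _ _ h.1 h'.1, W.le2_trans _ _ _ h'.2 h.2⟩

theorem valSet_finite (d : W.D) :
    {E : Set W.D | (∃ a, E = {b | W.sim2 a b}) ∧ ∀ e ∈ E, W.le2 e d}.Finite := by
  have := W.finD; exact Set.toFinite _

theorem val_mono {a b : W.D} (h : W.le2 a b) : W.val a ≤ W.val b := by
  apply Set.ncard_le_ncard _ (W.valSet_finite b)
  rintro E ⟨hE, hle⟩
  exact ⟨hE, fun e he => W.le2_trans _ _ _ (hle e he) h⟩

theorem lt2_of_val_lt {a b : W.D} (h : W.val a < W.val b) : W.lt2 a b := by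
  have hnb : ¬ W.le2 b a := fun hba => absurd (W.val_mono hba) (by omega)
  rcases W.le2_total a b with hab | hba
  · exact ⟨hab, hnb⟩
  · exact absurd hba hnb

theorem val_le_maxVal (d : W.D) : W.val d ≤ W.maxVal := by
  have := W.finD
  exact le_csSup (Set.Finite.bddAbove (Set.finite_range _)) ⟨d, rfl⟩

theorem exists_between {d y : W.D} (h : W.val d + 2 ≤ W.val y) :
    ∃ z, W.lt2 d z ∧ W.lt2 z y := by
  set A := {E : Set W.D | (∃ a, E = {b | W.sim2 a b}) ∧ ∀ e ∈ E, W.le2 e d} with hA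
  set B := {E : Set W.D | (∃ a, E = {b | W.sim2 a b}) ∧ ∀ e ∈ E, W.le2 e y} with hB
  have hdy : W.le2 d y := (W.lt2_of_val_lt (by omega)).1
  have hAB : A ⊆ B := by
    rintro E ⟨hE, hle⟩; exact ⟨hE, fun e he => W.le2_trans _ _ _ (hle e he) hdy⟩
  have hcard : 1 < (B \ A).ncard := by
    rw [Set.ncard_diff hAB (W.valSet_finite d)]
    have h' : A.ncard + 2 ≤ B.ncard := h
    omega
  rw [Set.one_lt_ncard_iff ((W.valSet_finite y).subset Set.diff_subset)] at hcard
  obtain ⟨E₁, E₂, hE₁, hE₂, hne⟩ := hcard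
  obtain ⟨⟨⟨a₁, rfl⟩, hle₁⟩, hnA₁⟩ := hE₁
  obtain ⟨⟨⟨a₂, rfl⟩, hle₂⟩, hnA₂⟩ := hE₂
  have h₁ : ∃ e ∈ {b | W.sim2 a₁ b}, ¬ W.le2 e d := by
    by_contra hc; push_neg at hc; exact hnA₁ ⟨⟨a₁, rfl⟩, hc⟩
  have h₂ : ∃ e ∈ {b | W.sim2 a₂ b}, ¬ W.le2 e d := by
    by_contra hc; push_neg at hc; exact hnA₂ ⟨⟨a₂, rfl⟩, hc⟩
  obtain ⟨e₁, hs₁, hned₁⟩ := h₁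
  obtain ⟨e₂, hs₂, hned₂⟩ := h₂
  have hey₁ : W.le2 e₁ y := hle₁ e₁ hs₁
  have hey₂ : W.le2 e₂ y := hle₂ e₂ hs₂
  have hsim : ¬ W.sim2 e₁ e₂ := by
    intro hs
    apply hne
    have h12 : W.sim2 a₁ a₂ :=
      W.sim2_trans' hs₁ (W.sim2_trans' hs (W.sim2_symm' hs₂))
    ext b
    exact ⟨fun hb => W.sim2_trans' (W.sim2_symm' h12) hb,
      fun hb => W.sim2_trans' h12 hb⟩
  by_cases h21 : W.le2 e₂ e₁
  · have h12 : ¬ W.le2 e₁ e₂ := fun hc => hsim ⟨hc, h21⟩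
    refine ⟨e₂, ⟨(W.le2_total d e₂).resolve_right hned₂, hned₂⟩,
      hey₂, fun hc => h12 (W.le2_trans _ _ _ hey₁ hc)⟩
  · refine ⟨e₁, ⟨(W.le2_total d e₁).resolve_right hned₁, hned₁⟩,
      hey₁, fun hc => h21 (W.le2_trans _ _ _ hey₂ hc)⟩

theorem trim_S2_iff {a b : W.D} (ha : W.val a ≠ W.maxVal) (hb : W.val b ≠ W.maxVal) :
    W.trim.S2 ⟨a, ha⟩ ⟨b, hb⟩ ↔ W.S2 a b := by
  constructor
  · rintro ⟨h1, h2⟩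
    refine ⟨h1, ?_⟩
    rintro ⟨z, hz1, hz2⟩
    have h3 : W.val z ≠ W.maxVal := by
      have h4 := W.val_mono hz2.1
      have h5 := W.val_le_maxVal b
      omega
    exact h2 ⟨⟨z, h3⟩, hz1, hz2⟩
  · rintro ⟨h1, h2⟩
    exact ⟨h1, fun ⟨z, hz1, hz2⟩ => h2 ⟨z.1, hz1, hz2⟩⟩

theorem holds_trim {θ : TwoType α} {a b : W.D} (ha : W.val a ≠ W.maxVal)
    (hb : W.val b ≠ W.maxVal) (h : θ.holds W a b) :
    θ.holds W.trim ⟨a, ha⟩ ⟨b, hb⟩ := by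
  obtain ⟨h1, h2, h3, h4, h5, h6⟩ := h
  refine ⟨h1, h2, ?_, ?_, ?_, ?_⟩
  · cases hh : θ.ord1 <;> rw [hh] at h3
    · exact ⟨h3.1, fun hc => h3.2 (congrArg Subtype.val hc)⟩
    · exact Subtype.ext h3
    · exact ⟨h3.1, fun hc => h3.2 (congrArg Subtype.val hc)⟩
  · cases hh : θ.ord2 <;> rw [hh] at h4 <;> exact h4
  · rw [W.trim_S2_iff ha hb]; exact h5
  · rw [W.trim_S2_iff hb ha]; exact h6

end DataWord

/-- Lemma: let `W` be a data word with maximal data value `M`, and `d ≤₁ d'`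
elements with the same 1-type and data values at most `M − 2` such that neither
has a `θ`-witness in the trimming `W↾₁`. If `θ(x,y) ⊨ x ≤₁ y` and `d'` has a
`θ`-witness in `W`, then so does `d`. -/
theorem witness_transfer_rest_layer {α : Type} (W : DataWord α) (d d' : W.D)
    (h1t : W.letter d = W.letter d')
    (hle : W.le1 d d')
    (hv : W.val d + 2 ≤ W.maxVal) (hv' : W.val d' + 2 ≤ W.maxVal)
    (hm : W.val d ≠ W.maxVal) (hm' : W.val d' ≠ W.maxVal)
    (θ : TwoType α)
    (hnot : ¬ ∃ y, θ.holds W.trim ⟨d, hm⟩ y)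
    (hnot' : ¬ ∃ y, θ.holds W.trim ⟨d', hm'⟩ y)
    (hdir : θ.ord1 ≠ Ordering.gt)
    (hwit : ∃ y, θ.holds W d' y) :
    ∃ y, θ.holds W d y := by
  obtain ⟨y, hy⟩ := hwit
  cases h1 : θ.ord1 with
  | gt => exact absurd h1 hdir
  | eq =>
    have heq : d' = y := by have h3 := hy.2.2.1; rw [h1] at h3; exact h3
    subst heq
    refine ⟨d, h1t.trans hy.1, h1t.trans hy.2.1, ?_, ?_, ?_, ?_⟩
    · rw [h1]
    · have h4 := hy.2.2.2.1
      cases h2 : θ.ord2 <;> rw [h2] at h4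
      · exact absurd (W.le2_refl d') h4.2
      · exact W.sim2_refl d
      · exact absurd (W.le2_refl d') h4.2
    · exact ⟨fun _ => hy.2.2.2.2.1.mp (W.S2_refl d'), fun _ => W.S2_refl d⟩
    · exact ⟨fun _ => hy.2.2.2.2.2.mp (W.S2_refl d'), fun _ => W.S2_refl d⟩
  | lt =>
    have hord1 : W.lt1 d' y := by have h3 := hy.2.2.1; rwa [h1] at h3
    have hyM : W.val y = W.maxVal := by
      by_contra hyM
      exact hnot' ⟨⟨y, hyM⟩, W.holds_trim hm' hyM hy⟩
    have hvy : W.val d + 2 ≤ W.val y := hyM ▸ hv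
    have hvy' : W.val d' + 2 ≤ W.val y := hyM ▸ hv'
    have hlt2 : W.lt2 d y := W.lt2_of_val_lt (by omega)
    have hlt2' : W.lt2 d' y := W.lt2_of_val_lt (by omega)
    obtain ⟨z, hz1, hz2⟩ := W.exists_between hvy
    obtain ⟨z', hz1', hz2'⟩ := W.exists_between hvy'
    have hsxy : θ.sxy = false := by
      have h5 := hy.2.2.2.2.1
      cases hb : θ.sxy
      · rfl
      · exact ((h5.mpr hb).2 ⟨z', hz1', hz2'⟩).elim
    have hsyx : θ.syx = false := by
      have h6 := hy.2.2.2.2.2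
      cases hb : θ.syx
      · rfl
      · exact (hlt2'.2 (h6.mpr hb).1).elim
    refine ⟨y, h1t.trans hy.1, hy.2.1, ?_, ?_, ?_, ?_⟩
    · rw [h1]
      exact ⟨W.le1_trans _ _ _ hle hord1.1,
        fun hc => hlt2.2 (by rw [hc]; exact W.le2_refl y)⟩
    · have h4 := hy.2.2.2.1
      cases h2 : θ.ord2 <;> rw [h2] at h4
      · exact hlt2
      · exact absurd h4.2 hlt2'.2
      · exact absurd h4.1 hlt2'.2
    · rw [hsxy]
      exact iff_of_false (fun hS => hS.2 ⟨z, hz1, hz2⟩) (by simp)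
    · rw [hsyx]
      exact iff_of_false (fun hS => hlt2.2 hS.1) (by simp)
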